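/- arXiv:1504.03839 — 6 statements merged into one kernel-verified Lean document; each statement's English description precedes it below -/
import Mathlib

section
/- Let k be an even positive integer and n ≥ 2, let T be a tensor of order k and dimension n, and let S be a nonempty proper subset of {1,…,n}. Suppose λ ∈ ℝ is an H-eigenvalue of T such that T z^k ≥ λ for every z ∈ ℝ^n with Σ_{i=1}^n z_i^k = 1. Then λ ≤ μ for every H-eigenvalue μ of the principal subtensor T[S]. -/
open Finset

/-- `T x^k` for a tensor `T` of order `k` on index type `ι`:
`T x^k = Σ_{i_1,…,i_k} T(i_1,…,i_k) x_{i_1} ⋯ x_{i_k}`. -/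
def tensorApply {k : ℕ} {ι : Type*} [Fintype ι] (T : (Fin k → ι) → ℝ) (x : ι → ℝ) : ℝ :=
  ∑ f : Fin k → ι, T f * ∏ j : Fin k, x (f j)

/-- The H-eigenvalue equation: for every `i`,
`Σ_{i_2,…,i_k} T(i,i_2,…,i_k) x_{i_2} ⋯ x_{i_k} = λ x_i^(k-1)`. -/
def HEigEq {k : ℕ} {ι : Type*} [Fintype ι] [DecidableEq ι] (hk : 0 < k)
    (T : (Fin k → ι) → ℝ) (lam : ℝ) (x : ι → ℝ) : Prop :=
  ∀ i : ι,
    (∑ f : Fin k → ι,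
      if f ⟨0, hk⟩ = i then T f * ∏ j ∈ Finset.univ.erase (⟨0, hk⟩ : Fin k), x (f j) else 0)
    = lam * x i ^ (k - 1)

/-- `lam` is an H-eigenvalue of the tensor `T`. -/
def IsHEig {k : ℕ} {ι : Type*} [Fintype ι] [DecidableEq ι] (hk : 0 < k)
    (T : (Fin k → ι) → ℝ) (lam : ℝ) : Prop :=
  ∃ x : ι → ℝ, x ≠ 0 ∧ HEigEq hk T lam x

/-!
Extend an H-eigenvector `y` of `T[S]` by zero to `z`. Contracting the eigen-equation with `y`
gives `T z^k = T[S] y^k = μ Σ y_i^k = μ Σ z_i^k`, and `Σ z_i^k > 0` because `k` is even. As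
`T z^k` is homogeneous of degree `k`, rescaling `z` onto the unit `k`-sphere and applying the
hypothesis gives `λ Σ z_i^k ≤ T z^k = μ Σ z_i^k`.
-/

section Tensor

variable {k : ℕ} {ι : Type*} [Fintype ι]

theorem tensorApply_smul (T : (Fin k → ι) → ℝ) (t : ℝ) (x : ι → ℝ) :
    tensorApply T (t • x) = t ^ k * tensorApply T x := by
  simp only [tensorApply, Finset.mul_sum, Pi.smul_apply, smul_eq_mul, Finset.prod_mul_distrib,
    Finset.prod_const, Finset.card_univ, Fintype.card_fin]
  exact Finset.sum_congr rfl fun f _ => by ring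

theorem tensorApply_eq_of_HEigEq [DecidableEq ι] {hk : 0 < k} {T : (Fin k → ι) → ℝ}
    {mu : ℝ} {y : ι → ℝ} (hy : HEigEq hk T mu y) :
    tensorApply T y = mu * ∑ i, y i ^ k := by
  calc tensorApply T y
      = ∑ i, y i * ∑ f : Fin k → ι, if f ⟨0, hk⟩ = i then
          T f * ∏ j ∈ Finset.univ.erase (⟨0, hk⟩ : Fin k), y (f j) else 0 := by
        simp only [Finset.mul_sum, mul_ite, mul_zero]
        rw [Finset.sum_comm]
        simp only [Finset.sum_ite_eq, Finset.mem_univ, if_true, tensorApply]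
        refine Finset.sum_congr rfl fun f _ => ?_
        rw [← Finset.mul_prod_erase _ (fun j => y (f j)) (Finset.mem_univ ⟨0, hk⟩)]
        ring
    _ = ∑ i, mu * (y i * y i ^ (k - 1)) := by
        refine Finset.sum_congr rfl fun i _ => ?_
        rw [hy i]
        ring
    _ = mu * ∑ i, y i ^ k := by
        rw [Finset.mul_sum]
        simp only [← pow_succ', Nat.sub_add_cancel hk]

theorem tensorApply_extend_zero {κ : Type*} [Fintype κ] {e : κ → ι} (he : e.Injective)
    (T : (Fin k → ι) → ℝ) (y : κ → ℝ) :
    tensorApply T (Function.extend e y 0) = tensorApply (fun f => T (fun j => e (f j))) y := by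
  refine (Fintype.sum_of_injective (fun f j => e (f j))
    (fun f g h => funext fun j => he (congrFun h j)) _ _ ?_ ?_).symm
  · intro f hf
    obtain ⟨j, hj⟩ : ∃ j, ¬∃ a, e a = f j := by
      by_contra! h
      choose g hg using h
      exact hf ⟨g, funext hg⟩
    rw [Finset.prod_eq_zero (Finset.mem_univ j) (Function.extend_apply' _ _ _ hj), mul_zero]
  · intro f
    simp only [he.extend_apply]

theorem sum_pow_extend_zero {κ : Type*} [Fintype κ] {e : κ → ι} (he : e.Injective)
    (hk : k ≠ 0) (y : κ → ℝ) :
    ∑ i, Function.extend e y 0 i ^ k = ∑ j, y j ^ k :=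
  (Fintype.sum_of_injective e he _ _
    (fun i hi => by rw [Function.extend_apply' _ _ _ hi, Pi.zero_apply, zero_pow hk])
    (fun j => by rw [he.extend_apply])).symm

theorem sum_pow_pos_of_ne_zero (hke : Even k) {y : ι → ℝ} (hy : y ≠ 0) :
    0 < ∑ i, y i ^ k := by
  obtain ⟨i, hi⟩ := Function.ne_iff.mp hy
  exact Finset.sum_pos' (fun j _ => hke.pow_nonneg _) ⟨i, Finset.mem_univ _, hke.pow_pos hi⟩

theorem mul_sum_pow_le_tensorApply (hk : k ≠ 0) {T : (Fin k → ι) → ℝ} {lam : ℝ}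
    (hmin : ∀ z : ι → ℝ, ∑ i, z i ^ k = 1 → lam ≤ tensorApply T z)
    {z : ι → ℝ} (hz : 0 < ∑ i, z i ^ k) :
    lam * ∑ i, z i ^ k ≤ tensorApply T z := by
  set c := ∑ i, z i ^ k
  have htk : (c ^ (-(k : ℝ)⁻¹)) ^ k = c⁻¹ := by
    rw [← Real.rpow_natCast, ← Real.rpow_mul hz.le, neg_mul,
      inv_mul_cancel₀ (Nat.cast_ne_zero.mpr hk), Real.rpow_neg_one]
  have hunit : ∑ i, (c ^ (-(k : ℝ)⁻¹) • z) i ^ k = 1 := by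
    simp only [Pi.smul_apply, smul_eq_mul, mul_pow, ← Finset.mul_sum, htk]
    exact inv_mul_cancel₀ hz.ne'
  have := hmin _ hunit
  rw [tensorApply_smul, htk, le_inv_mul_iff₀ hz] at this
  linarith

end Tensor

theorem stmt0_general (k n : ℕ) (hk : 0 < k) (hke : Even k)
    (T : (Fin k → Fin n) → ℝ)
    (S : Finset (Fin n))
    (lam : ℝ)
    (hmin : ∀ z : Fin n → ℝ, (∑ i : Fin n, z i ^ k) = 1 → lam ≤ tensorApply T z)
    (mu : ℝ)
    (hmu : IsHEig hk (fun f : Fin k → {i : Fin n // i ∈ S} => T (fun j => (f j : Fin n))) mu) :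
    lam ≤ mu := by
  obtain ⟨y, hy0, hy⟩ := hmu
  set z := Function.extend Subtype.val y 0
  have hsum : ∑ i, z i ^ k = ∑ i, y i ^ k := sum_pow_extend_zero Subtype.val_injective hk.ne' y
  have hpos : 0 < ∑ i, y i ^ k := sum_pow_pos_of_ne_zero hke hy0
  have hTz : tensorApply T z = mu * ∑ i, y i ^ k :=
    (tensorApply_extend_zero Subtype.val_injective T y).trans (tensorApply_eq_of_HEigEq hy)
  have hle := mul_sum_pow_le_tensorApply hk.ne' hmin (hsum ▸ hpos)
  rw [hsum, hTz] at hle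
  exact le_of_mul_le_mul_right hle hpos

/-- if `k` is even and positive, `n ≥ 2`, `λ` is an H-eigenvalue of `T` with
`T z^k ≥ λ` for all `z` with `Σ z_i^k = 1`, then `λ ≤ μ` for every H-eigenvalue `μ` of the
principal subtensor `T[S]`, where `S` is a nonempty proper subset of the index set. -/
theorem stmt0 (k n : ℕ) (hk : 0 < k) (hke : Even k) (hn : 2 ≤ n)
    (T : (Fin k → Fin n) → ℝ)
    (S : Finset (Fin n)) (hS : S.Nonempty) (hSne : S ≠ Finset.univ)
    (lam : ℝ) (hlam : IsHEig hk T lam)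
    (hmin : ∀ z : Fin n → ℝ, (∑ i : Fin n, z i ^ k) = 1 → lam ≤ tensorApply T z)
    (mu : ℝ)
    (hmu : IsHEig hk (fun f : Fin k → {i : Fin n // i ∈ S} => T (fun j => (f j : Fin n))) mu) :
    lam ≤ mu :=
  stmt0_general k n hk hke T S lam hmin mu hmu
end

section
/- Let k ≥ 2 and let H be a k-uniform hypergraph with at least one edge. Then there exists a signless Laplacian H-eigenvalue λ of H with λ > Δ(H), where Δ(H) is the maximum vertex degree of H. -/
/-!
Let `λ` be the maximum of the form `𝒬 x^k` over the nonnegative part of the unit `ℓ^k`-sphere,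
attained at `x`. By `k`-homogeneity, `𝒬 y^k ≤ λ ∑ y_v^k` for every `y ≥ 0`, with equality at `x`.
Moving one coordinate `x_v` along `[0, ∞)` therefore gives the eigen-equation at `v`: the
derivative vanishes when `x_v > 0`, and when `x_v = 0` its sign forces `(𝒜 x^{k-1})_v = 0`.
For `u` in an edge `e`, the vector equal to `1` at `u` and to `1 / d_u` on `e \ {u}` has
`𝒬 y^k > d_u ∑ y_v^k`, whence `λ > d_u`.
-/

open Finset

section HomogeneousMax

variable {V : Type*} [Fintype V] {k : ℕ}

def nonnegSphere (V : Type*) [Fintype V] (k : ℕ) : Set (V → ℝ) :=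
  {x | (∀ v, 0 ≤ x v) ∧ ∑ v, x v ^ k = 1}

lemma le_one_of_mem_nonnegSphere (hk : k ≠ 0) {x : V → ℝ} (hx : x ∈ nonnegSphere V k) (v : V) :
    x v ≤ 1 := by
  refine (pow_le_one_iff_of_nonneg (hx.1 v) hk).mp ?_
  rw [← hx.2]
  exact single_le_sum (f := fun w => x w ^ k) (fun w _ => pow_nonneg (hx.1 w) k) (mem_univ v)

lemma isCompact_nonnegSphere (hk : k ≠ 0) : IsCompact (nonnegSphere V k) := by
  refine isCompact_Icc.of_isClosed_subset ?_ fun x hx => ⟨hx.1, le_one_of_mem_nonnegSphere hk hx⟩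
  show IsClosed (Set.Ici 0 ∩ {x : V → ℝ | ∑ v, x v ^ k = 1})
  exact isClosed_Ici.inter <|
    isClosed_eq (continuous_finsetSum _ fun v _ => (continuous_apply v).pow k) continuous_const

lemma nonnegSphere_nonempty [Nonempty V] (hk : k ≠ 0) : (nonnegSphere V k).Nonempty := by
  classical
  obtain ⟨u⟩ := ‹Nonempty V›
  refine ⟨Pi.single u 1, fun v => ?_, ?_⟩
  · by_cases h : v = u <;> simp [h]
  · simp [Pi.single_apply, zero_pow hk]

lemma le_mul_sum_pow_of_isMaxOn (hk : k ≠ 0) {f : (V → ℝ) → ℝ}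
    (hf : ∀ c : ℝ, 0 ≤ c → ∀ y, f (c • y) = c ^ k * f y) {x : V → ℝ}
    (hmax : IsMaxOn f (nonnegSphere V k) x) {y : V → ℝ} (hy : ∀ v, 0 ≤ y v) :
    f y ≤ f x * ∑ v, y v ^ k := by
  set S := ∑ v, y v ^ k
  rcases (sum_nonneg fun v _ => pow_nonneg (hy v) k : 0 ≤ S).eq_or_lt with hS | hS
  · have hy0 : y = 0 := funext fun v => pow_eq_zero_iff hk |>.mp <|
      (sum_eq_zero_iff_of_nonneg fun w _ => pow_nonneg (hy w) k).mp hS.symm v (mem_univ v)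
    have : f 0 = 0 := by simpa [zero_pow hk] using hf 0 le_rfl 0
    simp [← hS, hy0, this, S]
  · set c := S ^ (k : ℝ)⁻¹
    have hc : 0 < c := Real.rpow_pos_of_pos hS _
    have hck : c ^ k = S := by
      rw [← Real.rpow_natCast, ← Real.rpow_mul hS.le, inv_mul_cancel₀ (by exact_mod_cast hk),
        Real.rpow_one]
    have hz : c⁻¹ • y ∈ nonnegSphere V k := by
      refine ⟨fun v => mul_nonneg (inv_nonneg.mpr hc.le) (hy v), ?_⟩
      simp only [Pi.smul_apply, smul_eq_mul, mul_pow, ← mul_sum, inv_pow, hck]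
      exact inv_mul_cancel₀ hS.ne'
    calc f y = c ^ k * f (c⁻¹ • y) := by
          rw [hf _ (inv_nonneg.mpr hc.le), ← mul_assoc, ← mul_pow, mul_inv_cancel₀ hc.ne',
            one_pow, one_mul]
      _ ≤ c ^ k * f x := mul_le_mul_of_nonneg_left (hmax hz) (by positivity)
      _ = f x * S := by rw [hck, mul_comm]

end HomogeneousMax

lemma HasDerivAt.nonpos_of_isMaxOn_Ici {g : ℝ → ℝ} {g' a : ℝ} (hg : HasDerivAt g g' a)
    (hmax : IsMaxOn g (Set.Ici 0) a) (ha : 0 ≤ a) : g' ≤ 0 := by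
  have hseg : segment ℝ a (a + 1) ⊆ Set.Ici 0 := by
    rw [segment_eq_Icc (by linarith)]
    exact fun t ht => ha.trans ht.1
  simpa using hmax.localize.hasFDerivWithinAt_nonpos
    hg.hasDerivWithinAt.hasFDerivWithinAt (mem_posTangentConeAt_of_segment_subset hseg)

namespace UniformHypergraph

variable {V : Type*} [DecidableEq V] (E : Finset (Finset V))

def degree (v : V) : ℕ := #{e ∈ E | v ∈ e}

/-- `adjApply E x v` is `(𝒜 x^{k-1})_v` for the adjacency tensor `𝒜` of `E`. -/
def adjApply (x : V → ℝ) (v : V) : ℝ := ∑ e ∈ E with v ∈ e, ∏ w ∈ e.erase v, x w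

def IsSignlessLaplacianHEigenpair (k : ℕ) (lam : ℝ) (x : V → ℝ) : Prop :=
  x ≠ 0 ∧ ∀ v, lam * x v ^ (k - 1) = degree E v * x v ^ (k - 1) + adjApply E x v

/-- The form `𝒬 x^k = 𝒟 x^k + 𝒜 x^k` of the signless Laplacian tensor; for a `k`-uniform `E`
with the normalized adjacency tensor, `𝒜 x^k = k ∑_{e ∈ E} ∏_{w ∈ e} x_w`. -/
def signlessLaplacianForm [Fintype V] (k : ℕ) (x : V → ℝ) : ℝ :=
  ∑ v, degree E v * x v ^ k + k * ∑ e ∈ E, ∏ w ∈ e, x w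

variable {E}

lemma adjApply_nonneg {x : V → ℝ} (hx : ∀ v, 0 ≤ x v) (v : V) : 0 ≤ adjApply E x v :=
  sum_nonneg fun _ _ => prod_nonneg fun w _ => hx w

lemma sum_prod_update (x : V → ℝ) (v : V) (t : ℝ) :
    ∑ e ∈ E, ∏ w ∈ e, Function.update x v t w
      = ∑ e ∈ E, ∏ w ∈ e, Function.update x v 0 w + t * adjApply E x v := by
  have hthrough : ∀ t : ℝ, ∑ e ∈ E with v ∈ e, ∏ w ∈ e, Function.update x v t w
      = t * adjApply E x v := fun t => by
    rw [adjApply, mul_sum]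
    refine sum_congr rfl fun e he => ?_
    rw [prod_update_of_mem (mem_filter.mp he).2, sdiff_singleton_eq_erase]
  have havoid : ∀ t : ℝ, ∑ e ∈ E with v ∉ e, ∏ w ∈ e, Function.update x v t w
      = ∑ e ∈ E with v ∉ e, ∏ w ∈ e, x w := fun t =>
    sum_congr rfl fun e he => prod_update_of_notMem (mem_filter.mp he).2 _ _
  rw [← sum_filter_add_sum_filter_not E (v ∈ ·), ← sum_filter_add_sum_filter_not E (v ∈ ·),
    hthrough, hthrough, havoid, havoid, zero_mul]
  ring

variable [Fintype V] {k : ℕ}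

lemma signlessLaplacianForm_smul (hunif : ∀ e ∈ E, #e = k) (c : ℝ) (x : V → ℝ) :
    signlessLaplacianForm E k (c • x) = c ^ k * signlessLaplacianForm E k x := by
  have hprod : ∀ e ∈ E, ∏ w ∈ e, c * x w = c ^ k * ∏ w ∈ e, x w := fun e he => by
    rw [prod_mul_distrib, prod_const, hunif e he]
  simp only [signlessLaplacianForm, Pi.smul_apply, smul_eq_mul, mul_pow, sum_congr rfl hprod,
    ← mul_sum, mul_add]
  simp only [mul_sum]
  congr 1 <;> exact sum_congr rfl fun _ _ => by ring

lemma continuous_signlessLaplacianForm : Continuous (signlessLaplacianForm E k) := by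
  unfold signlessLaplacianForm
  fun_prop

lemma sum_mul_update_pow (hk : k ≠ 0) (c x : V → ℝ) (v : V) (t : ℝ) :
    ∑ w, c w * Function.update x v t w ^ k
      = ∑ w, c w * Function.update x v 0 w ^ k + c v * t ^ k := by
  simp only [← sum_erase_add univ _ (mem_univ v), Function.update_self, zero_pow hk, mul_zero,
    add_zero]
  congr 1
  exact sum_congr rfl fun w hw => by rw [Function.update_of_ne (ne_of_mem_erase hw),
    Function.update_of_ne (ne_of_mem_erase hw)]

lemma signlessLaplacianForm_update (hk : k ≠ 0) (x : V → ℝ) (v : V) (t : ℝ) :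
    signlessLaplacianForm E k (Function.update x v t)
      = signlessLaplacianForm E k (Function.update x v 0) + degree E v * t ^ k
        + k * adjApply E x v * t := by
  rw [signlessLaplacianForm, signlessLaplacianForm,
    sum_mul_update_pow hk (fun w => (degree E w : ℝ)), sum_prod_update x v t]
  ring

theorem isSignlessLaplacianHEigenpair_of_isMaxOn (hk : 2 ≤ k) (hunif : ∀ e ∈ E, #e = k)
    {x : V → ℝ} (hx : x ∈ nonnegSphere V k)
    (hmax : IsMaxOn (signlessLaplacianForm E k) (nonnegSphere V k) x) :
    IsSignlessLaplacianHEigenpair E k (signlessLaplacianForm E k x) x := by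
  have hk0 : k ≠ 0 := by omega
  set lam := signlessLaplacianForm E k x
  refine ⟨fun h => by simpa [h, zero_pow hk0] using hx.2, fun v => ?_⟩
  set d : ℝ := (degree E v : ℝ)
  set s := adjApply E x v
  set g : ℝ → ℝ := fun t => signlessLaplacianForm E k (Function.update x v t)
    - lam * ∑ w, Function.update x v t w ^ k
  -- `signlessLaplacianForm` is `k`-homogeneous, so `g ≤ 0` on `t ≥ 0`, with equality at `x v`.
  have hg_max : IsMaxOn g (Set.Ici 0) (x v) := by
    intro t (ht : 0 ≤ t)
    have hnonneg : ∀ w, 0 ≤ Function.update x v t w := fun w => by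
      rcases eq_or_ne w v with rfl | hw
      · simpa using ht
      · simpa [hw] using hx.1 w
    have := le_mul_sum_pow_of_isMaxOn hk0
      (fun c _ y => signlessLaplacianForm_smul hunif c y) hmax hnonneg
    show g t ≤ g (x v)
    simp only [g, Function.update_eq_self, hx.2]
    linarith
  have hg : g = fun t => g 0 + (d - lam) * t ^ k + k * s * t := by
    ext t
    have h1 := sum_mul_update_pow hk0 1 x v t
    simp only [Pi.one_apply, one_mul] at h1
    simp only [g, signlessLaplacianForm_update hk0 x v t, h1]
    ring
  have hg_deriv : HasDerivAt g (k * ((d - lam) * x v ^ (k - 1) + s)) (x v) := by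
    rw [hg]
    exact ((((hasDerivAt_pow k (x v)).const_mul (d - lam)).const_add (g 0)).add
      ((hasDerivAt_id (x v)).const_mul (k * s))).congr_deriv (by ring)
  have hderiv_nonpos := hg_deriv.nonpos_of_isMaxOn_Ici hg_max (hx.1 v)
  have hkpos : (0 : ℝ) < k := by positivity
  rcases (hx.1 v).eq_or_lt with hxv | hxv
  · have hs : s = 0 := by
      rw [← hxv, zero_pow (by omega)] at hderiv_nonpos
      exact le_antisymm (by nlinarith) (adjApply_nonneg hx.1 v)
    rw [← hxv, zero_pow (by omega), hs]
    ring
  · have := (hg_max.isLocalMax (Ici_mem_nhds hxv)).hasDerivAt_eq_zero hg_deriv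
    rcases mul_eq_zero.mp this with h | h
    · exact absurd h hkpos.ne'
    · linarith

lemma degree_mul_pow_add_le_signlessLaplacianForm {y : V → ℝ} (hy : ∀ v, 0 ≤ y v) (u : V)
    {e : Finset V} (he : e ∈ E) :
    degree E u * y u ^ k + k * ∏ w ∈ e, y w ≤ signlessLaplacianForm E k y := by
  unfold signlessLaplacianForm
  gcongr
  · exact single_le_sum (f := fun v => (degree E v : ℝ) * y v ^ k)
      (fun v _ => mul_nonneg (Nat.cast_nonneg _) (pow_nonneg (hy v) k)) (mem_univ u)
  · exact single_le_sum (f := fun e => ∏ w ∈ e, y w) (fun _ _ => prod_nonneg fun w _ => hy w) he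

lemma exists_degree_mul_sum_pow_lt_signlessLaplacianForm (hk : 2 ≤ k)
    (hunif : ∀ e ∈ E, #e = k) {e : Finset V} (he : e ∈ E) {u : V} (hu : u ∈ e) :
    ∃ y : V → ℝ, (∀ v, 0 ≤ y v) ∧ 0 < ∑ v, y v ^ k ∧
      degree E u * ∑ v, y v ^ k < signlessLaplacianForm E k y := by
  have hk0 : k ≠ 0 := by omega
  set d : ℝ := (degree E u : ℝ)
  have hd : 1 ≤ d := Nat.one_le_cast.mpr <| card_pos.mpr ⟨e, mem_filter.mpr ⟨he, hu⟩⟩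
  set b := d⁻¹
  have hb : 0 < b := by positivity
  set y : V → ℝ := fun w => if w = u then 1 else if w ∈ e then b else 0
  have hy : ∀ w, 0 ≤ y w := fun w => by
    simp only [y]
    split_ifs <;> positivity
  have hyu : y u = 1 := if_pos rfl
  have hy_erase : ∀ w ∈ e.erase u, y w = b := fun w hw => by
    simp [y, ne_of_mem_erase hw, mem_of_mem_erase hw]
  have hcard : #(e.erase u) = k - 1 := by rw [card_erase_of_mem hu, hunif e he]
  have hsum : ∑ w, y w ^ k = 1 + (k - 1) * b ^ k := by
    have hout : ∀ w ∈ univ, w ∉ e → y w ^ k = 0 := fun w _ hw => by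
      simp [y, hw, ne_of_mem_of_not_mem hu hw |>.symm, zero_pow hk0]
    rw [← sum_subset (subset_univ e) hout, ← add_sum_erase e _ hu, hyu,
      sum_congr rfl fun w hw => by rw [hy_erase w hw], sum_const, hcard, nsmul_eq_mul,
      Nat.cast_sub (by omega)]
    ring
  have hprod : ∏ w ∈ e, y w = b ^ (k - 1) := by
    rw [← mul_prod_erase e _ hu, hyu, prod_congr rfl hy_erase, prod_const, hcard, one_mul]
  have hlower := degree_mul_pow_add_le_signlessLaplacianForm (k := k) hy u he
  rw [hprod, hyu, one_pow, mul_one] at hlower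
  have hk1 : (1 : ℝ) ≤ k := by exact_mod_cast (by omega : 1 ≤ k)
  refine ⟨y, hy, by rw [hsum]; nlinarith [pow_pos hb k], ?_⟩
  calc d * ∑ w, y w ^ k = d + (k - 1) * b ^ (k - 1) := by
        rw [hsum, ← pow_sub_mul_pow b (by omega : 1 ≤ k), pow_one]
        linear_combination ((k : ℝ) - 1) * b ^ (k - 1) * mul_inv_cancel₀ (by positivity : d ≠ 0)
    _ < d + k * b ^ (k - 1) := by nlinarith [pow_pos hb (k - 1)]
    _ ≤ signlessLaplacianForm E k y := hlower

theorem degree_lt_of_mem_of_isMaxOn (hk : 2 ≤ k) (hunif : ∀ e ∈ E, #e = k) {x : V → ℝ}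
    (hmax : IsMaxOn (signlessLaplacianForm E k) (nonnegSphere V k) x) {e : Finset V}
    (he : e ∈ E) {u : V} (hu : u ∈ e) :
    (degree E u : ℝ) < signlessLaplacianForm E k x := by
  obtain ⟨y, hy, hpos, hlt⟩ := exists_degree_mul_sum_pow_lt_signlessLaplacianForm hk hunif he hu
  have hupper := le_mul_sum_pow_of_isMaxOn (by omega)
    (fun c _ y => signlessLaplacianForm_smul hunif c y) hmax hy
  exact lt_of_mul_lt_mul_right (hlt.trans_le hupper) hpos.le

theorem degree_lt_of_isMaxOn (hk : 2 ≤ k) (hunif : ∀ e ∈ E, #e = k) (hE : E.Nonempty)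
    {x : V → ℝ} (hmax : IsMaxOn (signlessLaplacianForm E k) (nonnegSphere V k) x) (v : V) :
    (degree E v : ℝ) < signlessLaplacianForm E k x := by
  rcases (degree E v).eq_zero_or_pos with hv | hv
  · obtain ⟨e, he⟩ := hE
    obtain ⟨u, hu⟩ := card_pos.mp (hunif e he ▸ (by omega : 0 < k))
    rw [hv, Nat.cast_zero]
    exact (Nat.cast_nonneg _).trans_lt (degree_lt_of_mem_of_isMaxOn hk hunif hmax he hu)
  · obtain ⟨e, he⟩ := card_pos.mp hv
    exact degree_lt_of_mem_of_isMaxOn hk hunif hmax (mem_filter.mp he).1 (mem_filter.mp he).2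

end UniformHypergraph

open UniformHypergraph in
/-- a `k`-uniform hypergraph (`k ≥ 2`) with at least one edge has a signless
Laplacian H-eigenvalue `λ` with `λ > Δ(H)`, the maximum vertex degree. -/
theorem stmt3 {V : Type*} [Fintype V] [DecidableEq V] [Nonempty V]
    (k : ℕ) (hk : 2 ≤ k)
    (E : Finset (Finset V)) (hunif : ∀ e ∈ E, e.card = k) (hE : E.Nonempty) :
    ∃ (lam : ℝ) (x : V → ℝ), x ≠ 0 ∧
      (∀ v : V,
        lam * x v ^ (k - 1)
          = ((E.filter (fun e => v ∈ e)).card : ℝ) * x v ^ (k - 1)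
            + ∑ e ∈ E.filter (fun e => v ∈ e), ∏ w ∈ e.erase v, x w) ∧
      ((Finset.univ.sup' Finset.univ_nonempty
          (fun v : V => (E.filter (fun e => v ∈ e)).card) : ℕ) : ℝ) < lam := by
  have hk0 : k ≠ 0 := by omega
  obtain ⟨x, hx, hmax⟩ := (isCompact_nonnegSphere hk0).exists_isMaxOn
    (nonnegSphere_nonempty hk0) (continuous_signlessLaplacianForm (E := E)).continuousOn
  obtain ⟨hx0, heigen⟩ := isSignlessLaplacianHEigenpair_of_isMaxOn hk hunif hx hmax
  refine ⟨_, x, hx0, heigen, ?_⟩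
  obtain ⟨v, -, hv⟩ := exists_mem_eq_sup' univ_nonempty (degree E)
  exact hv ▸ degree_lt_of_isMaxOn hk hunif hE hmax v
end

section
/- Let G be a finite simple graph and let k ≥ 4 be an even integer. Then the generalized power hypergraph G^{k,k/2} is odd-bipartite if and only if G is bipartite. -/
open Finset

/-- The edge set of the generalized power hypergraph `G^{k, k/2}` (with `s = k/2`):
each edge `{u,v}` of `G` is blown up into the `2s`-set `({u} × Fin s) ∪ ({v} × Fin s)`. -/
def powerEdges {V : Type*} [Fintype V] [DecidableEq V] (G : SimpleGraph V)
    [DecidableRel G.Adj] (s : ℕ) : Finset (Finset (V × Fin s)) :=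
  (Finset.univ.filter fun p : V × V => G.Adj p.1 p.2).image
    (fun p => ({p.1} ×ˢ (Finset.univ : Finset (Fin s)))
        ∪ ({p.2} ×ˢ (Finset.univ : Finset (Fin s))))

/-- `lam` is an adjacency H-eigenvalue of the generalized power hypergraph `G^{k,s}`
(`k = 2s`) with H-eigenvector `x`. -/
def IsAdjHEigPow {V : Type*} [Fintype V] [DecidableEq V] (G : SimpleGraph V)
    [DecidableRel G.Adj] (k s : ℕ) (lam : ℝ) (x : V × Fin s → ℝ) : Prop :=
  x ≠ 0 ∧ ∀ p : V × Fin s,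
    lam * x p ^ (k - 1)
      = ∑ e ∈ (powerEdges G s).filter (fun e => p ∈ e), ∏ w ∈ e.erase p, x w

/-- `lam` is a signless Laplacian H-eigenvalue of the generalized power hypergraph
`G^{k,s}` (`k = 2s`) with H-eigenvector `x`. -/
def IsQHEigPow {V : Type*} [Fintype V] [DecidableEq V] (G : SimpleGraph V)
    [DecidableRel G.Adj] (k s : ℕ) (lam : ℝ) (x : V × Fin s → ℝ) : Prop :=
  x ≠ 0 ∧ ∀ p : V × Fin s,
    lam * x p ^ (k - 1)
      = (((powerEdges G s).filter (fun e => p ∈ e)).card : ℝ) * x p ^ (k - 1)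
        + ∑ e ∈ (powerEdges G s).filter (fun e => p ∈ e), ∏ w ∈ e.erase p, x w

/-! A vertex set `V₁` meets the blown-up edge of `uv` in an odd number of points iff exactly one
of the fibers over `u` and `v` meets `V₁` oddly, so the parities of the fiber counts 2-color `G`.
Conversely, a bipartition `A` of `G` is recovered by putting one point of each fiber over `A`
into `V₁`. -/

section Fibers

variable {V α : Type*} [DecidableEq V]

lemma card_fibers_union_inter [DecidableEq α] [Fintype α] {u v : V} (huv : u ≠ v)
    (T : Finset (V × α)) :
    #(({u} ×ˢ univ ∪ {v} ×ˢ univ) ∩ T) = #(T.filter (·.1 = u)) + #(T.filter (·.1 = v)) := by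
  rw [← card_union_of_disjoint (disjoint_filter.2 fun _ _ h h' => huv (h.symm.trans h')),
    ← filter_or]
  congr 1
  ext ⟨w, i⟩
  simp [and_comm, eq_comm]

lemma card_filter_fst_eq_product (A : Finset V) (B : Finset α) (u : V) :
    #((A ×ˢ B).filter (·.1 = u)) = if u ∈ A then #B else 0 := by
  rw [filter_product_left (· = u), card_product, filter_eq']
  split_ifs <;> simp

end Fibers

lemma mem_powerEdges {V : Type*} [Fintype V] [DecidableEq V] {G : SimpleGraph V}
    [DecidableRel G.Adj] {s : ℕ} {e : Finset (V × Fin s)} :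
    e ∈ powerEdges G s ↔ ∃ u v, G.Adj u v ∧ e = {u} ×ˢ univ ∪ {v} ×ˢ univ := by
  simp [powerEdges, eq_comm]

/-- for a finite simple graph `G` and even `k ≥ 4` with `s = k/2`, the
generalized power hypergraph `G^{k,k/2}` is odd-bipartite iff `G` is bipartite. -/
theorem stmt5 {V : Type*} [Fintype V] [DecidableEq V] (G : SimpleGraph V)
    [DecidableRel G.Adj] (k s : ℕ) (hk : 4 ≤ k) (hks : k = 2 * s) :
    (∃ V₁ : Finset (V × Fin s), ∀ e ∈ powerEdges G s, Odd ((e ∩ V₁).card)) ↔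
    (∃ A : Set V, ∀ u v : V, G.Adj u v → (u ∈ A ↔ v ∉ A)) := by
  classical
  constructor
  · rintro ⟨V₁, hV₁⟩
    refine ⟨{u | Odd #(V₁.filter (·.1 = u))}, fun u v huv => ?_⟩
    have hodd := hV₁ _ (mem_powerEdges.2 ⟨u, v, huv, rfl⟩)
    rwa [card_fibers_union_inter huv.ne, Nat.odd_add, ← Nat.not_odd_iff_even] at hodd
  · rintro ⟨A, hA⟩
    refine ⟨(univ.filter (· ∈ A)) ×ˢ {(⟨0, by omega⟩ : Fin s)}, fun e he => ?_⟩
    obtain ⟨u, v, huv, rfl⟩ := mem_powerEdges.1 he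
    rw [card_fibers_union_inter huv.ne, card_filter_fst_eq_product, card_filter_fst_eq_product]
    by_cases hu : u ∈ A
    · simp [hu, (hA u v huv).1 hu]
    · simp [hu, not_not.1 (mt (hA u v huv).2 hu)]
end

section
/- Let G be a finite simple graph, let k ≥ 4 be an even integer with s = k/2, and suppose λ ≠ 0 is an adjacency H-eigenvalue of the generalized power hypergraph G^{k,k/2} with H-eigenvector x : V(G) × {1,…,s} → ℝ. Then for every v ∈ V(G) and all i, j ∈ {1,…,s}, x_{(v,i)}^k = x_{(v,j)}^k, and hence |x_{(v,i)}| = |x_{(v,j)}|. -/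
/-! Multiplying the eigenequation at `p` by `x p` turns its right-hand side into the sum, over
the edges containing `p`, of the product of `x` over the whole edge. An edge of `G^{k,k/2}` that
meets a half edge contains all of it, so for `p = (v, i)` this sum does not depend on `i`;
cancelling `λ ≠ 0` leaves `x (v, i) ^ k = x (v, j) ^ k`. -/

open Finset

lemma mul_pow_eq_sum_prod_of_mul_pow_pred_eq {α R : Type*} [DecidableEq α] [CommSemiring R]
    (E : Finset (Finset α)) {k : ℕ} (hk : k ≠ 0) {lam : R} {x : α → R} {p : α}
    (h : lam * x p ^ (k - 1) = ∑ e ∈ E.filter (fun e => p ∈ e), ∏ w ∈ e.erase p, x w) :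
    lam * x p ^ k = ∑ e ∈ E.filter (fun e => p ∈ e), ∏ w ∈ e, x w := by
  rw [← Nat.sub_add_cancel (Nat.one_le_iff_ne_zero.mpr hk), pow_succ', mul_left_comm,
    h, mul_sum]
  exact sum_congr rfl fun e he => mul_prod_erase e x (mem_filter.mp he).2

lemma filter_mk_mem_powerEdges {V : Type*} [Fintype V] [DecidableEq V] (G : SimpleGraph V)
    [DecidableRel G.Adj] (s : ℕ) (v : V) (i j : Fin s) :
    (powerEdges G s).filter (fun e => (v, i) ∈ e)
      = (powerEdges G s).filter (fun e => (v, j) ∈ e) := by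
  refine filter_congr fun e he => ?_
  obtain ⟨p, -, rfl⟩ := mem_image.mp he
  simp

theorem stmt6_general {V : Type*} [Fintype V] [DecidableEq V] (G : SimpleGraph V)
    [DecidableRel G.Adj] (k s : ℕ) (hks : k = 2 * s)
    (lam : ℝ) (x : V × Fin s → ℝ) (hlam : lam ≠ 0)
    (heig : IsAdjHEigPow G k s lam x) (v : V) (i j : Fin s) :
    x (v, i) ^ k = x (v, j) ^ k ∧ |x (v, i)| = |x (v, j)| := by
  have hk : k ≠ 0 := by have := i.pos; omega
  have hsum (l : Fin s) :=
    mul_pow_eq_sum_prod_of_mul_pow_pred_eq (powerEdges G s) hk (heig.2 (v, l))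
  have hpow : x (v, i) ^ k = x (v, j) ^ k :=
    mul_left_cancel₀ hlam (by rw [hsum i, hsum j, filter_mk_mem_powerEdges G s v i j])
  exact ⟨hpow,
    (pow_left_inj₀ (abs_nonneg _) (abs_nonneg _) hk).mp (by rw [pow_abs, pow_abs, hpow])⟩

/-- if `λ ≠ 0` is an adjacency H-eigenvalue of `G^{k,k/2}` with H-eigenvector
`x`, then within each half edge `{v} × Fin s` the entries of `x` have equal `k`-th powers,
hence equal absolute values. -/
theorem stmt6 {V : Type*} [Fintype V] [DecidableEq V] (G : SimpleGraph V)
    [DecidableRel G.Adj] (k s : ℕ) (hk : 4 ≤ k) (hks : k = 2 * s)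
    (lam : ℝ) (x : V × Fin s → ℝ) (hlam : lam ≠ 0)
    (heig : IsAdjHEigPow G k s lam x) (v : V) (i j : Fin s) :
    x (v, i) ^ k = x (v, j) ^ k ∧ |x (v, i)| = |x (v, j)| :=
  stmt6_general G k s hks lam x hlam heig v i j
end

section
/- Let G be a finite simple graph, let k ≥ 4 be an even integer with s = k/2, let v ∈ V(G), and suppose λ is a signless Laplacian H-eigenvalue of the generalized power hypergraph G^{k,k/2} with H-eigenvector x : V(G) × {1,…,s} → ℝ, where λ ≠ deg_G(v). Then for all i, j ∈ {1,…,s}, x_{(v,i)}^k = x_{(v,j)}^k, and hence |x_{(v,i)}| = |x_{(v,j)}|. -/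
open Finset

/-! Around a vertex `v`, every edge of `G^{k,s}` through `(v, i)` is `({v} ∪ {u}) × Fin s` for a
neighbour `u` of `v`, and it contributes `(∏_{l ≠ i} x (v, l)) · ∏_l x (u, l)` to the eigenvalue
equation at `(v, i)`. Multiplying that equation by `x (v, i)` therefore gives
`(λ - deg v) · x (v, i) ^ k = (∏_l x (v, l)) · ∑_{u ~ v} ∏_l x (u, l)`, whose right-hand side does
not depend on `i`; cancelling `λ - deg v ≠ 0` yields equal `k`-th powers. -/

namespace PowerHypergraph

variable {V : Type*} [DecidableEq V] {s : ℕ}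

def powerEdge (s : ℕ) (u w : V) : Finset (V × Fin s) :=
  ({u} ×ˢ (univ : Finset (Fin s))) ∪ ({w} ×ˢ (univ : Finset (Fin s)))

@[simp]
lemma mem_powerEdge {u w : V} {p : V × Fin s} : p ∈ powerEdge s u w ↔ p.1 = u ∨ p.1 = w := by
  obtain ⟨a, b⟩ := p
  simp [powerEdge, eq_comm]

lemma powerEdge_comm (u w : V) : powerEdge s u w = powerEdge s w u :=
  union_comm _ _

lemma powerEdge_injOn [NeZero s] (u : V) : Set.InjOn (powerEdge s u) {w | w ≠ u} := by
  intro w hw w' _ h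
  have hmem : (w, (0 : Fin s)) ∈ powerEdge s u w' := h ▸ mem_powerEdge.2 (Or.inr rfl)
  exact (mem_powerEdge.1 hmem).resolve_left hw

lemma erase_powerEdge {u w : V} (huw : u ≠ w) (i : Fin s) :
    (powerEdge s u w).erase (u, i) = ({u} ×ˢ (univ.erase i)) ∪ ({w} ×ˢ univ) := by
  ext ⟨a, b⟩
  simp only [mem_erase, mem_powerEdge, mem_union, mem_product, mem_singleton, mem_univ,
    and_true, ne_eq, Prod.mk.injEq]
  constructor
  · rintro ⟨hab, rfl | rfl⟩
    · exact Or.inl ⟨rfl, fun hb => hab ⟨rfl, hb⟩⟩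
    · exact Or.inr rfl
  · rintro (⟨rfl, hb⟩ | rfl)
    · exact ⟨fun h => hb h.2, Or.inl rfl⟩
    · exact ⟨fun h => huw h.1.symm, Or.inr rfl⟩

lemma prod_erase_powerEdge {M : Type*} [CommMonoid M] (x : V × Fin s → M) {u w : V}
    (huw : u ≠ w) (i : Fin s) :
    ∏ p ∈ (powerEdge s u w).erase (u, i), x p
      = (∏ l ∈ univ.erase i, x (u, l)) * ∏ l, x (w, l) := by
  have hdisj : Disjoint ({u} ×ˢ (univ.erase i)) ({w} ×ˢ (univ : Finset (Fin s))) :=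
    disjoint_product.2 (Or.inl (disjoint_singleton.2 huw))
  rw [erase_powerEdge huw, prod_union hdisj, prod_product, prod_product, prod_singleton,
    prod_singleton]

variable [Fintype V] (G : SimpleGraph V) [DecidableRel G.Adj]

lemma powerEdges_eq_image :
    powerEdges G s = (univ.filter fun p : V × V => G.Adj p.1 p.2).image
      fun p => powerEdge s p.1 p.2 :=
  rfl

lemma injOn_powerEdge_neighborFinset [NeZero s] (v : V) :
    Set.InjOn (powerEdge s v) (G.neighborFinset v : Set V) :=
  (powerEdge_injOn v).mono fun u hu => ((G.mem_neighborFinset v u).1 hu).ne'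

lemma filter_mem_powerEdges (v : V) (i : Fin s) :
    (powerEdges G s).filter (fun e => (v, i) ∈ e) = (G.neighborFinset v).image (powerEdge s v) := by
  ext e
  simp only [powerEdges_eq_image, mem_filter, mem_image, mem_univ, true_and,
    SimpleGraph.mem_neighborFinset, Prod.exists]
  constructor
  · rintro ⟨⟨a, b, hab, rfl⟩, hv⟩
    rcases mem_powerEdge.1 hv with rfl | rfl
    · exact ⟨b, hab, rfl⟩
    · exact ⟨a, hab.symm, powerEdge_comm _ _⟩
  · rintro ⟨u, hvu, rfl⟩
    exact ⟨⟨v, u, hvu, rfl⟩, mem_powerEdge.2 (Or.inl rfl)⟩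

lemma card_filter_mem_powerEdges (v : V) (i : Fin s) :
    ((powerEdges G s).filter (fun e => (v, i) ∈ e)).card = G.degree v := by
  have : NeZero s := NeZero.of_pos i.pos
  rw [filter_mem_powerEdges, card_image_of_injOn (injOn_powerEdge_neighborFinset G v),
    SimpleGraph.card_neighborFinset_eq_degree]

lemma sum_filter_mem_powerEdges_prod_erase (x : V × Fin s → ℝ) (v : V) (i : Fin s) :
    ∑ e ∈ (powerEdges G s).filter (fun e => (v, i) ∈ e), ∏ w ∈ e.erase (v, i), x w
      = (∏ l ∈ univ.erase i, x (v, l)) * ∑ u ∈ G.neighborFinset v, ∏ l, x (u, l) := by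
  have : NeZero s := NeZero.of_pos i.pos
  rw [filter_mem_powerEdges, sum_image (injOn_powerEdge_neighborFinset G v), mul_sum]
  refine sum_congr rfl fun u hu => prod_erase_powerEdge x ?_ i
  exact ((G.mem_neighborFinset v u).1 hu).ne

end PowerHypergraph

open PowerHypergraph

lemma IsQHEigPow.sub_degree_mul_pow {V : Type*} [Fintype V] [DecidableEq V]
    {G : SimpleGraph V} [DecidableRel G.Adj] {k s : ℕ} {lam : ℝ} {x : V × Fin s → ℝ}
    (heig : IsQHEigPow G k s lam x) (hk : k ≠ 0) (v : V) (i : Fin s) :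
    (lam - G.degree v) * x (v, i) ^ k
      = (∏ l, x (v, l)) * ∑ u ∈ G.neighborFinset v, ∏ l, x (u, l) := by
  have h := heig.2 (v, i)
  rw [card_filter_mem_powerEdges, sum_filter_mem_powerEdges_prod_erase] at h
  calc (lam - G.degree v) * x (v, i) ^ k
      = (lam * x (v, i) ^ (k - 1) - G.degree v * x (v, i) ^ (k - 1)) * x (v, i) := by
        rw [← pow_sub_one_mul hk]; ring
    _ = (∏ l, x (v, l)) * ∑ u ∈ G.neighborFinset v, ∏ l, x (u, l) := by
        rw [h, ← mul_prod_erase univ (fun l => x (v, l)) (mem_univ i)]; ring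

theorem stmt7_general {V : Type*} [Fintype V] [DecidableEq V] (G : SimpleGraph V)
    [DecidableRel G.Adj] (k s : ℕ) (hk : 4 ≤ k)
    (v : V) (lam : ℝ) (x : V × Fin s → ℝ) (hlam : lam ≠ (G.degree v : ℝ))
    (heig : IsQHEigPow G k s lam x) (i j : Fin s) :
    x (v, i) ^ k = x (v, j) ^ k ∧ |x (v, i)| = |x (v, j)| := by
  have hk0 : k ≠ 0 := by omega
  have hpow : x (v, i) ^ k = x (v, j) ^ k :=
    mul_left_cancel₀ (sub_ne_zero.2 hlam)
      ((heig.sub_degree_mul_pow hk0 v i).trans (heig.sub_degree_mul_pow hk0 v j).symm)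
  refine ⟨hpow, (pow_left_inj₀ (abs_nonneg _) (abs_nonneg _) hk0).1 ?_⟩
  rw [pow_abs, pow_abs, hpow]

/-- if `λ` is a signless Laplacian H-eigenvalue of `G^{k,k/2}` with
H-eigenvector `x` and `λ ≠ deg_G(v)`, then within the half edge `{v} × Fin s` the entries
of `x` have equal `k`-th powers, hence equal absolute values. -/
theorem stmt7 {V : Type*} [Fintype V] [DecidableEq V] (G : SimpleGraph V)
    [DecidableRel G.Adj] (k s : ℕ) (hk : 4 ≤ k) (hks : k = 2 * s)
    (v : V) (lam : ℝ) (x : V × Fin s → ℝ) (hlam : lam ≠ (G.degree v : ℝ))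
    (heig : IsQHEigPow G k s lam x) (i j : Fin s) :
    x (v, i) ^ k = x (v, j) ^ k ∧ |x (v, i)| = |x (v, j)| :=
  stmt7_general G k s hk v lam x hlam heig i j
end

section
/- Let G be a finite simple graph, let k ≥ 4 be an even integer with s = k/2, and suppose λ ≠ 0 is an adjacency H-eigenvalue of the generalized power hypergraph G^{k,k/2} with H-eigenvector x. Let U = {v ∈ V(G) : x_{(v,i)} ≠ 0 for some i ∈ {1,…,s}}. Then the vector y : U → ℝ defined by y_u = Π_{i=1}^{s} x_{(u,i)} is nonzero and satisfies A(G[U]) y = λ y; in particular, λ is an eigenvalue of the adjacency matrix of the induced subgraph G[U]. -/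
/-!
Write `Y v = ∏ᵢ x (v, i)` and `S v = ∑_{u ∼ v} Y u`. The edges of `G^{k,s}` through `(v, i)` are
the blocks of `v` joined with the block of a neighbour `u`, so multiplying the eigen-equation at
`(v, i)` by `x (v, i)` gives `λ x(v,i)^k = Y v · S v`. As `λ ≠ 0`, `x(v,i)^k` does not depend on
`i`, hence `Y v ^ 2 = x(v,i)^k` because `k = 2s`. So `Y v ≠ 0` exactly on `U`, where dividing by
`Y v` gives `λ Y v = S v`, and `Y` vanishes off `U`.
-/

open Finset

theorem Finset.mul_sum_filter_mem_prod_erase {α M : Type*} [DecidableEq α] [CommSemiring M]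
    (E : Finset (Finset α)) (x : α → M) (p : α) :
    x p * ∑ e ∈ E.filter (p ∈ ·), ∏ w ∈ e.erase p, x w = ∑ e ∈ E.filter (p ∈ ·), ∏ w ∈ e, x w := by
  rw [mul_sum]
  exact sum_congr rfl fun e he => mul_prod_erase e x (mem_filter.1 he).2

section ProductBlocks

variable {V β M : Type*} [DecidableEq V] [DecidableEq β] [Fintype β] [CommMonoid M]

theorem Finset.injOn_singleton_product_union [Nonempty β] (v : V) :
    Set.InjOn (fun u => ({v} ×ˢ univ ∪ {u} ×ˢ univ : Finset (V × β))) {u | u ≠ v} := by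
  intro u hu u' hu' h
  obtain ⟨b⟩ := ‹Nonempty β›
  have hmem := (Finset.ext_iff.1 h (u, b)).1 (by simp)
  simp only [mem_union, mem_product, mem_singleton, mem_univ, and_true] at hmem
  exact hmem.resolve_left hu

theorem Finset.prod_singleton_product_union {v u : V} (hvu : v ≠ u) (x : V × β → M) :
    ∏ w ∈ ({v} ×ˢ univ ∪ {u} ×ˢ univ : Finset (V × β)), x w
      = (∏ j, x (v, j)) * ∏ j, x (u, j) := by
  rw [prod_union (disjoint_product.2 (Or.inl (disjoint_singleton.2 hvu))),
    singleton_product, singleton_product, prod_map, prod_map]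
  rfl

end ProductBlocks

section PowerHypergraph

variable {V : Type*} [Fintype V] [DecidableEq V] (G : SimpleGraph V) [DecidableRel G.Adj] {s : ℕ}

theorem filter_mem_powerEdges (v : V) (i : Fin s) :
    (powerEdges G s).filter ((v, i) ∈ ·)
      = (G.neighborFinset v).image fun u => {v} ×ˢ univ ∪ {u} ×ˢ univ := by
  ext e
  simp only [powerEdges, mem_filter, mem_image, mem_univ, true_and, Prod.exists,
    SimpleGraph.mem_neighborFinset]
  constructor
  · rintro ⟨⟨a, b, hab, rfl⟩, hmem⟩
    simp only [mem_union, mem_product, mem_singleton, mem_univ, and_true] at hmem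
    rcases hmem with rfl | rfl
    · exact ⟨b, hab, rfl⟩
    · exact ⟨a, hab.symm, union_comm _ _⟩
  · rintro ⟨u, hadj, rfl⟩
    exact ⟨⟨v, u, hadj, rfl⟩, by simp⟩

theorem sum_filter_mem_powerEdges_prod {M : Type*} [CommSemiring M] [NeZero s]
    (x : V × Fin s → M) (v : V) (i : Fin s) :
    ∑ e ∈ (powerEdges G s).filter ((v, i) ∈ ·), ∏ w ∈ e, x w
      = (∏ j, x (v, j)) * ∑ u ∈ G.neighborFinset v, ∏ j, x (u, j) := by
  rw [filter_mem_powerEdges, sum_image, mul_sum]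
  · refine sum_congr rfl fun u hu => prod_singleton_product_union ?_ x
    exact G.ne_of_adj ((G.mem_neighborFinset v u).1 hu)
  · intro u hu u' hu'
    exact injOn_singleton_product_union v
      (G.ne_of_adj ((G.mem_neighborFinset v u).1 hu)).symm
      (G.ne_of_adj ((G.mem_neighborFinset v u').1 hu')).symm

end PowerHypergraph

theorem sq_prod_eq_of_forall_pow_eq {ι R : Type*} [Fintype ι] [CommRing R] [LinearOrder R]
    [IsStrictOrderedRing R] {n : ℕ} (hn : Fintype.card ι = n) (f : ι → R) (i : ι)
    (hf : ∀ j, f j ^ (2 * n) = f i ^ (2 * n)) :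
    (∏ j, f j) ^ 2 = f i ^ (2 * n) := by
  have hn0 : n ≠ 0 := hn ▸ (Fintype.card_pos_iff.2 ⟨i⟩).ne'
  refine (pow_left_inj₀ (sq_nonneg _) (Even.pow_nonneg (even_two_mul n) _) hn0).1 ?_
  rw [← pow_mul, ← prod_pow, prod_congr rfl fun j _ => hf j, prod_const, card_univ, hn]

theorem SimpleGraph.mulVec_restrict_eq_smul {V R : Type*} [Fintype V] (G : SimpleGraph V)
    [DecidableRel G.Adj] [CommSemiring R] {U : Set V} [Fintype U]
    (f : V → R) (lam : R) (hf : ∀ v ∉ U, f v = 0)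
    (heig : ∀ v ∈ U, lam * f v = ∑ u ∈ G.neighborFinset v, f u) :
    (Matrix.of fun u w : U => if G.Adj u w then (1 : R) else 0).mulVec (fun u => f u)
      = lam • fun u : U => f u := by
  funext v
  rw [Pi.smul_apply, smul_eq_mul, heig v v.2, ← G.adjMatrix_mulVec_apply]
  simp only [Matrix.mulVec, dotProduct, Matrix.of_apply, adjMatrix_apply]
  refine (sum_set_coe (s := U) (f := fun w => (if G.Adj v w then 1 else 0) * f w)).trans
    (Fintype.sum_subset fun w hw => Set.mem_toFinset.2 ?_)
  by_contra hwU
  exact hw (by rw [hf w hwU, mul_zero])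

namespace IsAdjHEigPow

variable {V : Type*} [Fintype V] [DecidableEq V] {G : SimpleGraph V} [DecidableRel G.Adj]
  {k s : ℕ} {lam : ℝ} {x : V × Fin s → ℝ}

theorem neZero (h : IsAdjHEigPow G k s lam x) : NeZero s := by
  obtain ⟨⟨_, i⟩, -⟩ := Function.ne_iff.1 h.1
  exact ⟨Fin.pos_iff_nonempty.2 ⟨i⟩ |>.ne'⟩

theorem mul_pow_eq (h : IsAdjHEigPow G k s lam x) (hk : k ≠ 0) (v : V) (i : Fin s) :
    lam * x (v, i) ^ k = (∏ j, x (v, j)) * ∑ u ∈ G.neighborFinset v, ∏ j, x (u, j) := by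
  have := h.neZero
  calc lam * x (v, i) ^ k = x (v, i) * (lam * x (v, i) ^ (k - 1)) := by
        rw [mul_left_comm, ← pow_succ', Nat.sub_add_cancel (Nat.one_le_iff_ne_zero.2 hk)]
    _ = _ := by
        rw [h.2, mul_sum_filter_mem_prod_erase, sum_filter_mem_powerEdges_prod]

theorem prod_ne_zero_iff (h : IsAdjHEigPow G k s lam x) (hlam : lam ≠ 0) (hk : k ≠ 0) (v : V) :
    ∏ j, x (v, j) ≠ 0 ↔ ∃ i, x (v, i) ≠ 0 := by
  have := h.neZero
  constructor
  · exact fun hv => ⟨0, fun h0 => hv (prod_eq_zero (mem_univ 0) h0)⟩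
  · rintro ⟨i, hi⟩ hv
    have := h.mul_pow_eq hk v i
    rw [hv, zero_mul] at this
    exact mul_ne_zero hlam (pow_ne_zero k hi) this

theorem lam_mul_prod_eq (h : IsAdjHEigPow G k s lam x) (hlam : lam ≠ 0) (hks : k = 2 * s)
    {v : V} (hv : ∏ j, x (v, j) ≠ 0) :
    lam * ∏ j, x (v, j) = ∑ u ∈ G.neighborFinset v, ∏ j, x (u, j) := by
  have := h.neZero
  have hk : k ≠ 0 := by have := NeZero.ne s; omega
  have hsq : (∏ j, x (v, j)) ^ 2 = x (v, 0) ^ k := by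
    subst hks
    refine sq_prod_eq_of_forall_pow_eq (Fintype.card_fin s) _ 0 fun j => ?_
    exact mul_left_cancel₀ hlam ((h.mul_pow_eq hk v j).trans (h.mul_pow_eq hk v 0).symm)
  refine mul_left_cancel₀ hv ?_
  rw [← h.mul_pow_eq hk v 0, ← hsq]
  ring

end IsAdjHEigPow

open scoped Classical in
theorem stmt9_general {V : Type*} [Fintype V] [DecidableEq V] (G : SimpleGraph V)
    [DecidableRel G.Adj] (k s : ℕ) (hks : k = 2 * s)
    (lam : ℝ) (x : V × Fin s → ℝ) (hlam : lam ≠ 0)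
    (heig : IsAdjHEigPow G k s lam x)
    (U : Set V) (hU : U = {v : V | ∃ i : Fin s, x (v, i) ≠ 0})
    (y : U → ℝ) (hy : ∀ u : U, y u = ∏ i : Fin s, x (u.1, i)) :
    y ≠ 0 ∧
      (Matrix.of fun u w : U => if G.Adj u.1 w.1 then (1 : ℝ) else 0).mulVec y
        = lam • y := by
  obtain rfl : y = fun u => ∏ i : Fin s, x (u.1, i) := funext hy
  have hk : k ≠ 0 := by have := heig.neZero.ne; omega
  have hmemU (v : V) : v ∈ U ↔ ∏ i, x (v, i) ≠ 0 := by
    rw [hU, heig.prod_ne_zero_iff hlam hk]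
    rfl
  refine ⟨?_, G.mulVec_restrict_eq_smul (fun v => ∏ i, x (v, i)) lam
    (fun v hv => not_not.1 fun hv' => hv ((hmemU v).2 hv'))
    fun v hv => heig.lam_mul_prod_eq hlam hks ((hmemU v).1 hv)⟩
  obtain ⟨⟨v, i⟩, hvi⟩ := Function.ne_iff.1 heig.1
  have hv : v ∈ U := hU ▸ ⟨i, hvi⟩
  exact Function.ne_iff.2 ⟨⟨v, hv⟩, (hmemU v).1 hv⟩

open scoped Classical in
/-- if `λ ≠ 0` is an adjacency H-eigenvalue of `G^{k,k/2}` with H-eigenvector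
`x` and `U = {v : x is nonzero somewhere on the half edge of v}`, then the vector
`y_u = Π_i x_{(u,i)}` on `U` is nonzero and is an eigenvector of the adjacency matrix of
the induced subgraph `G[U]` for the eigenvalue `λ`. -/
theorem stmt9 {V : Type*} [Fintype V] [DecidableEq V] (G : SimpleGraph V)
    [DecidableRel G.Adj] (k s : ℕ) (hk : 4 ≤ k) (hks : k = 2 * s)
    (lam : ℝ) (x : V × Fin s → ℝ) (hlam : lam ≠ 0)
    (heig : IsAdjHEigPow G k s lam x)
    (U : Set V) (hU : U = {v : V | ∃ i : Fin s, x (v, i) ≠ 0})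
    (y : U → ℝ) (hy : ∀ u : U, y u = ∏ i : Fin s, x (u.1, i)) :
    y ≠ 0 ∧
      (Matrix.of fun u w : U => if G.Adj u.1 w.1 then (1 : ℝ) else 0).mulVec y
        = lam • y :=
  stmt9_general G k s hks lam x hlam heig U hU y hy
end
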